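/- arXiv:2502.06520 — 4 statements merged into one kernel-verified Lean document; each statement's English description precedes it below -/
import Mathlib

section
/- Let Δ be a d-dimensional simplicial complex with a gradient vector field V, let (σ_0^{(k)}, τ_0^{(k−1)}) be a cancellable critical pair for some k ∈ {1,…,d}, and let W be the gradient vector field obtained by cancelling (σ_0, τ_0) from V. If σ_1, …, σ_n are the W-critical k-simplices (so that Crit_k^V(Δ) = {σ_0, σ_1, …, σ_n}), and β is any W-critical (k+1)-simplex with ∂_{k+1}^V(β) = Σ_{j=0}^n b_j σ_j, then ∂_{k+1}^W(β) = Σ_{j=1}^n b_j σ_j. -/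
open scoped Classical

/-- A finite abstract simplicial complex on a linearly ordered vertex type:
a finite nonempty collection of finite subsets closed under taking subsets. -/
structure SComplex (V : Type*) [LinearOrder V] where
  faces : Finset (Finset V)
  nonempty' : faces.Nonempty
  downClosed : ∀ σ ∈ faces, ∀ τ ⊆ σ, τ ∈ faces

variable {V : Type*} [LinearOrder V]

/-- `Vf` is a discrete vector field on `Δ`: a collection of pairs `(α, β)` of simplices
with `α ⊊ β`, `dim β = dim α + 1`, such that each simplex is in at most one pair. -/
def IsDVF (Δ : SComplex V) (Vf : Finset (Finset V × Finset V)) : Prop :=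
  (∀ p ∈ Vf, p.1 ∈ Δ.faces ∧ p.2 ∈ Δ.faces ∧ p.1 ⊂ p.2 ∧ p.2.card = p.1.card + 1) ∧
    ∀ p ∈ Vf, ∀ q ∈ Vf, p ≠ q → p.1 ≠ q.1 ∧ p.1 ≠ q.2 ∧ p.2 ≠ q.1 ∧ p.2 ≠ q.2

/-- The incidence number `⟨σ, τ⟩`: it is `(-1)^i` if `τ = σ \ {x_i}` where
`x_0 < x_1 < …` are the vertices of `σ`, and `0` otherwise. -/
noncomputable def incidence (σ τ : Finset V) : ℤ :=
  if τ ⊆ σ ∧ (σ \ τ).card = 1 then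
    (-1) ^ (σ.filter fun y => ∃ x ∈ σ \ τ, y < x).card
  else 0

/-- A `Vf`-trajectory `β₀, α₁, β₁, …, α_r, β_r` from the `q`-simplex `s` to the
`q`-simplex `t`.  Here the field `α i` denotes `α_{i+1}` and `β i` denotes `β_i`
of the usual description. -/
structure Traj (Δ : SComplex V) (Vf : Finset (Finset V × Finset V)) (q : ℕ)
    (s t : Finset V) where
  r : ℕ
  β : Fin (r + 1) → Finset V
  α : Fin r → Finset V
  βmem : ∀ i, β i ∈ Δ.faces
  αmem : ∀ i, α i ∈ Δ.faces
  βcard : ∀ i, (β i).card = q + 1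
  αcard : ∀ i, (α i).card = q
  first : β 0 = s
  last : β (Fin.last r) = t
  sub : ∀ i : Fin r, α i ⊂ β i.castSucc
  vpair : ∀ i : Fin r, (α i, β i.succ) ∈ Vf
  αne : ∀ i : Fin r, ∀ h : (i : ℕ) + 1 < r, α ⟨(i : ℕ) + 1, h⟩ ≠ α i
  βne : ∀ i : Fin r, β i.succ ≠ β i.castSucc

/-- A `Vf`-trajectory `β₀, α₁, β₁, …, α_r, β_r, α_{r+1}` from the `q`-simplex `s`
to the `(q-1)`-simplex `t`.  Here `α i` denotes `α_{i+1}` and `β i` denotes `β_i`. -/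
structure TrajD (Δ : SComplex V) (Vf : Finset (Finset V × Finset V)) (q : ℕ)
    (s t : Finset V) where
  r : ℕ
  β : Fin (r + 1) → Finset V
  α : Fin (r + 1) → Finset V
  βmem : ∀ i, β i ∈ Δ.faces
  αmem : ∀ i, α i ∈ Δ.faces
  βcard : ∀ i, (β i).card = q + 1
  αcard : ∀ i, (α i).card = q
  first : β 0 = s
  last : α (Fin.last r) = t
  sub : ∀ i : Fin (r + 1), α i ⊂ β i
  vpair : ∀ i : Fin r, (α i.castSucc, β i.succ) ∈ Vf
  αne : ∀ i : Fin r, α i.succ ≠ α i.castSucc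
  βne : ∀ i : Fin r, β i.succ ≠ β i.castSucc

/-- A co-`Vf`-trajectory `β₀, τ₁, β₁, …, τ_r, β_r` from the `q`-simplex `s` to the
`q`-simplex `t`.  Here `γ i` denotes `τ_{i+1}` and `β i` denotes `β_i`. -/
structure CoTraj (Δ : SComplex V) (Vf : Finset (Finset V × Finset V)) (q : ℕ)
    (s t : Finset V) where
  r : ℕ
  β : Fin (r + 1) → Finset V
  γ : Fin r → Finset V
  βmem : ∀ i, β i ∈ Δ.faces
  γmem : ∀ i, γ i ∈ Δ.faces
  βcard : ∀ i, (β i).card = q + 1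
  γcard : ∀ i, (γ i).card = q + 2
  first : β 0 = s
  last : β (Fin.last r) = t
  sub : ∀ i : Fin r, β i.castSucc ⊂ γ i
  vpair : ∀ i : Fin r, (β i.succ, γ i) ∈ Vf
  βne : ∀ i : Fin r, β i.castSucc ≠ β i.succ

/-- A co-`Vf`-trajectory `β₀, τ₁, β₁, …, τ_r, β_r, τ_{r+1}` from the `(q-1)`-simplex `s`
to the `q`-simplex `t`.  Here `γ i` denotes `τ_{i+1}` and `β i` denotes `β_i`. -/
structure CoTrajU (Δ : SComplex V) (Vf : Finset (Finset V × Finset V)) (q : ℕ)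
    (s t : Finset V) where
  r : ℕ
  β : Fin (r + 1) → Finset V
  γ : Fin (r + 1) → Finset V
  βmem : ∀ i, β i ∈ Δ.faces
  γmem : ∀ i, γ i ∈ Δ.faces
  βcard : ∀ i, (β i).card = q
  γcard : ∀ i, (γ i).card = q + 1
  first : β 0 = s
  last : γ (Fin.last r) = t
  sub : ∀ i : Fin (r + 1), β i ⊂ γ i
  vpair : ∀ i : Fin r, (β i.succ, γ i.castSucc) ∈ Vf
  βne : ∀ i : Fin r, β i.castSucc ≠ β i.succ
  γne : ∀ i : Fin r, γ i.succ ≠ γ i.castSucc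

/-- The weight `w(P) = ∏ (-⟨β_{i-1}, α_i⟩⟨β_i, α_i⟩)` of a trajectory between
`q`-simplices. -/
noncomputable def wT {Δ : SComplex V} {Vf : Finset (Finset V × Finset V)} {q : ℕ}
    {s t : Finset V} (P : Traj Δ Vf q s t) : ℤ :=
  ∏ i : Fin P.r, -(incidence (P.β i.castSucc) (P.α i) * incidence (P.β i.succ) (P.α i))

/-- The weight `w(P) = (∏ (-⟨β_{i-1}, α_i⟩⟨β_i, α_i⟩)) ⬝ ⟨β_r, α_{r+1}⟩` of a trajectory
from a `q`-simplex to a `(q-1)`-simplex. -/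
noncomputable def wTD {Δ : SComplex V} {Vf : Finset (Finset V × Finset V)} {q : ℕ}
    {s t : Finset V} (P : TrajD Δ Vf q s t) : ℤ :=
  (∏ i : Fin P.r,
      -(incidence (P.β i.castSucc) (P.α i.castSucc) *
        incidence (P.β i.succ) (P.α i.castSucc))) *
    incidence (P.β (Fin.last P.r)) (P.α (Fin.last P.r))

/-- The weight `w(Q) = ∏ (-⟨τ_i, β_{i-1}⟩⟨τ_i, β_i⟩)` of a co-trajectory between
`q`-simplices. -/
noncomputable def wCT {Δ : SComplex V} {Vf : Finset (Finset V × Finset V)} {q : ℕ}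
    {s t : Finset V} (Q : CoTraj Δ Vf q s t) : ℤ :=
  ∏ i : Fin Q.r, -(incidence (Q.γ i) (Q.β i.castSucc) * incidence (Q.γ i) (Q.β i.succ))

/-- The weight `w(Q) = (∏ (-⟨τ_i, β_{i-1}⟩⟨τ_i, β_i⟩)) ⬝ ⟨τ_{r+1}, β_r⟩` of a co-trajectory
from a `(q-1)`-simplex to a `q`-simplex. -/
noncomputable def wCTU {Δ : SComplex V} {Vf : Finset (Finset V × Finset V)} {q : ℕ}
    {s t : Finset V} (Q : CoTrajU Δ Vf q s t) : ℤ :=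
  (∏ i : Fin Q.r,
      -(incidence (Q.γ i.castSucc) (Q.β i.castSucc) *
        incidence (Q.γ i.castSucc) (Q.β i.succ))) *
    incidence (Q.γ (Fin.last Q.r)) (Q.β (Fin.last Q.r))

/-- A gradient vector field: a discrete vector field admitting no nontrivial closed
trajectory. -/
def IsGVF (Δ : SComplex V) (Vf : Finset (Finset V × Finset V)) : Prop :=
  IsDVF Δ Vf ∧ ¬ ∃ (q : ℕ) (s : Finset V) (P : Traj Δ Vf q s s), 0 < P.r

/-- `σ` is a critical simplex of `Δ` with respect to `Vf`: a nonempty simplex that either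
belongs to no pair of `Vf`, or is a `0`-simplex paired with the empty simplex. -/
def IsCrit (Δ : SComplex V) (Vf : Finset (Finset V × Finset V)) (σ : Finset V) : Prop :=
  σ ∈ Δ.faces ∧ σ.Nonempty ∧
    ((∀ p ∈ Vf, σ ≠ p.1 ∧ σ ≠ p.2) ∨ (σ.card = 1 ∧ (∅, σ) ∈ Vf))

/-- The set of critical simplices of cardinality `c` (i.e. of dimension `c - 1`);
so `Crit_q = critC Δ Vf (q + 1)`. -/
noncomputable def critC (Δ : SComplex V) (Vf : Finset (Finset V × Finset V)) (c : ℕ) :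
    Finset (Finset V) :=
  Δ.faces.filter fun σ => σ.card = c ∧ IsCrit Δ Vf σ

/-- The coefficient of the `(q-1)`-simplex `τ` in `∂_q σ`: the sum of the weights of all
trajectories from `σ` to `τ`. -/
noncomputable def bCoeff (Δ : SComplex V) (Vf : Finset (Finset V × Finset V)) (q : ℕ)
    (σ τ : Finset V) : ℤ :=
  ∑ᶠ P : TrajD Δ Vf q σ τ, wTD P

/-- The `q`-th Morse boundary operator `∂_q`, as an endomorphism of the free abelian group
on all simplices; it sends a critical `q`-simplex `σ` to
`∑_{τ ∈ Crit_{q-1}} (∑_{P : σ ⇝ τ} w(P)) ⬝ τ` and non-critical generators to `0`. -/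
noncomputable def morseBoundary (Δ : SComplex V) (Vf : Finset (Finset V × Finset V))
    (q : ℕ) : (Finset V →₀ ℤ) →ₗ[ℤ] (Finset V →₀ ℤ) :=
  Finsupp.lsum ℤ fun σ => LinearMap.toSpanSingleton ℤ (Finset V →₀ ℤ)
    (if σ ∈ critC Δ Vf (q + 1) then
      ∑ τ ∈ critC Δ Vf q, bCoeff Δ Vf q σ τ • Finsupp.single τ (1 : ℤ)
    else 0)

/-- The coefficient of the `q`-simplex `τ` in `δ_q σ`: the sum of the weights of all
co-trajectories from `σ` to `τ`. -/
noncomputable def cbCoeff (Δ : SComplex V) (Vf : Finset (Finset V × Finset V)) (q : ℕ)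
    (σ τ : Finset V) : ℤ :=
  ∑ᶠ Q : CoTrajU Δ Vf q σ τ, wCTU Q

/-- The `q`-th Morse coboundary operator `δ_q`, as an endomorphism of the free abelian
group on all simplices; it sends a critical `(q-1)`-simplex `σ` to
`∑_{τ ∈ Crit_q} (∑_{Q : σ ⇝ τ} w(Q)) ⬝ τ` and non-critical generators to `0`. -/
noncomputable def morseCoboundary (Δ : SComplex V) (Vf : Finset (Finset V × Finset V))
    (q : ℕ) : (Finset V →₀ ℤ) →ₗ[ℤ] (Finset V →₀ ℤ) :=
  Finsupp.lsum ℤ fun σ => LinearMap.toSpanSingleton ℤ (Finset V →₀ ℤ)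
    (if σ ∈ critC Δ Vf q then
      ∑ τ ∈ critC Δ Vf (q + 1), cbCoeff Δ Vf q σ τ • Finsupp.single τ (1 : ℤ)
    else 0)

/-- The vector field `W = (V \ {(α_i, β_i) : 1 ≤ i ≤ r}) ∪ {(α_{i+1}, β_i) : 0 ≤ i ≤ r}`
obtained by cancelling a pair of critical simplices along the trajectory `P0`. -/
noncomputable def cancelPair {Δ : SComplex V} {Vf : Finset (Finset V × Finset V)} {k : ℕ}
    {σ0 τ0 : Finset V} (P0 : TrajD Δ Vf k σ0 τ0) : Finset (Finset V × Finset V) :=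
  (Vf \ Finset.image (fun i : Fin P0.r => (P0.α i.castSucc, P0.β i.succ)) Finset.univ) ∪
    Finset.image (fun i : Fin (P0.r + 1) => (P0.α i, P0.β i)) Finset.univ

/-- The set of simplices appearing in a trajectory. -/
noncomputable def TrajD.simps {Δ : SComplex V} {Vf : Finset (Finset V × Finset V)} {q : ℕ}
    {s t : Finset V} (P : TrajD Δ Vf q s t) : Finset (Finset V) :=
  Finset.image P.β Finset.univ ∪ Finset.image P.α Finset.univ

/-- The set of simplices appearing in a trajectory. -/
noncomputable def Traj.simps {Δ : SComplex V} {Vf : Finset (Finset V × Finset V)} {q : ℕ}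
    {s t : Finset V} (P : Traj Δ Vf q s t) : Finset (Finset V) :=
  Finset.image P.β Finset.univ ∪ Finset.image P.α Finset.univ

/-- The underlying sequence `β₀, α₁, β₁, …, α_r, β_r, α_{r+1}` of a trajectory. -/
noncomputable def TrajD.seq {Δ : SComplex V} {Vf : Finset (Finset V × Finset V)} {q : ℕ}
    {s t : Finset V} (P : TrajD Δ Vf q s t) : List (Finset V) :=
  (List.ofFn fun i : Fin (P.r + 1) => [P.β i, P.α i]).flatten

/-- The underlying sequence `β₀, α₁, β₁, …, α_r, β_r` of a trajectory. -/
noncomputable def Traj.seq {Δ : SComplex V} {Vf : Finset (Finset V × Finset V)} {q : ℕ}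
    {s t : Finset V} (P : Traj Δ Vf q s t) : List (Finset V) :=
  ((List.ofFn fun i : Fin P.r => [P.β i.castSucc, P.α i]).flatten) ++ [P.β (Fin.last P.r)]

/-- The underlying sequence `β₀, τ₁, β₁, …, β_r, τ_{r+1}` of a co-trajectory. -/
noncomputable def CoTrajU.seq {Δ : SComplex V} {Vf : Finset (Finset V × Finset V)} {q : ℕ}
    {s t : Finset V} (Q : CoTrajU Δ Vf q s t) : List (Finset V) :=
  (List.ofFn fun i : Fin (Q.r + 1) => [Q.β i, Q.γ i]).flatten

section Aux

variable {Δ : SComplex V} {Vf : Finset (Finset V × Finset V)} {k : ℕ}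
  {σ0 τ0 : Finset V} (P0 : TrajD Δ Vf k σ0 τ0)

lemma mem_cancelPair_of_card {p : Finset V × Finset V} (hp : p ∈ Vf)
    (hc : p.1.card ≠ k) : p ∈ cancelPair P0 := by
  unfold cancelPair
  refine Finset.mem_union_left _ (Finset.mem_sdiff.2 ⟨hp, ?_⟩)
  intro h
  obtain ⟨i, -, hi⟩ := Finset.mem_image.1 h
  apply hc
  rw [← hi]
  exact P0.αcard _

lemma mem_of_mem_cancelPair {p : Finset V × Finset V} (hp : p ∈ cancelPair P0)
    (hc : p.1.card ≠ k) : p ∈ Vf := by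
  unfold cancelPair at hp
  rcases Finset.mem_union.1 hp with h | h
  · exact (Finset.mem_sdiff.1 h).1
  · obtain ⟨i, -, hi⟩ := Finset.mem_image.1 h
    exact absurd (by rw [← hi]; exact P0.αcard _) hc

/-- Trajectories at a level `q ≠ k` are the same for `Vf` and `cancelPair P0`. -/
noncomputable def trajDEquiv {q : ℕ} (hq : q ≠ k) (s t : Finset V) :
    TrajD Δ Vf q s t ≃ TrajD Δ (cancelPair P0) q s t where
  toFun P :=
    ⟨P.r, P.β, P.α, P.βmem, P.αmem, P.βcard, P.αcard, P.first, P.last, P.sub,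
      fun i => mem_cancelPair_of_card P0 (P.vpair i) (by rw [P.αcard]; exact hq),
      P.αne, P.βne⟩
  invFun P :=
    ⟨P.r, P.β, P.α, P.βmem, P.αmem, P.βcard, P.αcard, P.first, P.last, P.sub,
      fun i => mem_of_mem_cancelPair P0 (P.vpair i) (by rw [P.αcard]; exact hq),
      P.αne, P.βne⟩
  left_inv _ := rfl
  right_inv _ := rfl

lemma bCoeff_cancelPair {q : ℕ} (hq : q ≠ k) (s t : Finset V) :
    bCoeff Δ (cancelPair P0) q s t = bCoeff Δ Vf q s t := by
  unfold bCoeff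
  rw [← finsum_comp_equiv (trajDEquiv P0 hq s t)]
  rfl

lemma morseBoundary_single (Δ' : SComplex V) (Vf' : Finset (Finset V × Finset V))
    (q : ℕ) (β : Finset V) :
    morseBoundary Δ' Vf' q (Finsupp.single β 1) =
      (if β ∈ critC Δ' Vf' (q + 1) then
        ∑ τ ∈ critC Δ' Vf' q, bCoeff Δ' Vf' q β τ • Finsupp.single τ (1 : ℤ)
      else 0) := by
  simp [morseBoundary]

end Aux

/-- If ∂_{k+1}^V β = Σ_{j=0}^n b_j σ_j then ∂_{k+1}^W β = Σ_{j=1}^n b_j σ_j. -/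
theorem statement_6 (Δ : SComplex V) (d k : ℕ)
    (hdim : ∀ σ ∈ Δ.faces, σ.card ≤ d + 1) (hdim' : ∃ σ ∈ Δ.faces, σ.card = d + 1)
    (hk1 : 1 ≤ k) (hkd : k ≤ d)
    (Vf : Finset (Finset V × Finset V)) (hV : IsGVF Δ Vf)
    (σ0 τ0 : Finset V) (hσ0 : σ0 ∈ critC Δ Vf (k + 1)) (hτ0 : τ0 ∈ critC Δ Vf k)
    (P0 : TrajD Δ Vf k σ0 τ0) (hP0uniq : ∀ Q : TrajD Δ Vf k σ0 τ0, Q = P0)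
    (n : ℕ) (σ : Fin (n + 1) → Finset V) (hσinj : Function.Injective σ)
    (hσzero : σ 0 = σ0)
    (hcritV : critC Δ Vf (k + 1) = Finset.image σ Finset.univ)
    (hcritW : critC Δ (cancelPair P0) (k + 1) =
      Finset.image (fun j : Fin n => σ j.succ) Finset.univ)
    (β : Finset V) (hβ : β ∈ critC Δ (cancelPair P0) (k + 2))
    (b : Fin (n + 1) → ℤ)
    (hb : morseBoundary Δ Vf (k + 1) (Finsupp.single β 1) =
      ∑ j : Fin (n + 1), b j • Finsupp.single (σ j) (1 : ℤ)) :
    morseBoundary Δ (cancelPair P0) (k + 1) (Finsupp.single β 1) =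
      ∑ j : Fin n, b j.succ • Finsupp.single (σ j.succ) (1 : ℤ) := by
  classical
  obtain ⟨hβfaces, hβcard, hβcritW⟩ := Finset.mem_filter.1 hβ
  -- β is also critical for Vf
  have hnotrem : ∀ p : Finset V × Finset V, p.1.card ≠ k →
      p ∉ Finset.image (fun i : Fin P0.r => (P0.α i.castSucc, P0.β i.succ))
        Finset.univ := by
    intro p hc h
    obtain ⟨i, -, hi⟩ := Finset.mem_image.1 h
    exact hc (by rw [← hi]; exact P0.αcard _)
  have hβV : β ∈ critC Δ Vf (k + 2) := by
    refine Finset.mem_filter.2 ⟨hβfaces, hβcard, hβfaces, ?_, Or.inl ?_⟩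
    · rw [← Finset.card_pos, hβcard]; omega
    · intro p hp
      rcases hβcritW.2.2 with hW | hW
      · constructor
        · intro h1
          have hpW : p ∈ cancelPair P0 :=
            mem_cancelPair_of_card P0 hp (by rw [← h1, hβcard]; omega)
          exact (hW p hpW).1 h1
        · intro h2
          have hc : p.2.card = p.1.card + 1 := (hV.1.1 p hp).2.2.2
          have hpW : p ∈ cancelPair P0 := by
            refine mem_cancelPair_of_card P0 hp ?_
            rw [← h2, hβcard] at hc; omega
          exact (hW p hpW).2 h2
      · exfalso; rw [hβcard] at hW; omega
  -- extract coefficients from hb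
  rw [morseBoundary_single, if_pos hβV, hcritV,
    Finset.sum_image (fun i _ j _ h => hσinj h)] at hb
  have hcoef : ∀ j : Fin (n + 1), bCoeff Δ Vf (k + 1) β (σ j) = b j := by
    intro i
    have h := DFunLike.congr_fun hb (σ i)
    simpa [Finsupp.finset_sum_apply, Finsupp.single_apply, hσinj.eq_iff,
      Finset.sum_ite_eq'] using h
  -- compute the W-boundary
  rw [morseBoundary_single, if_pos hβ, hcritW,
    Finset.sum_image (fun i _ j _ h => Fin.succ_injective n (hσinj h))]
  refine Finset.sum_congr rfl fun j _ => ?_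
  rw [bCoeff_cancelPair P0 (by omega), hcoef j.succ]
end

section
/- Let Δ be a d-dimensional simplicial complex with a gradient vector field V, let (σ_0^{(k)}, τ_0^{(k−1)}) be a cancellable critical pair for some k ∈ {1,…,d}, and let W be the gradient vector field obtained by cancelling (σ_0, τ_0) from V. Then for every q with q > k+1 or q < k−1, the Morse coboundary operators coincide: δ_q^W = δ_q^V. -/
open scoped Classical

variable {V : Type*} [LinearOrder V]

section Aux

variable {Δ : SComplex V} {Vf : Finset (Finset V × Finset V)} {k : ℕ}
  {σ0 τ0 : Finset V} (P0 : TrajD Δ Vf k σ0 τ0)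

lemma mem_cancelPair_iff {p : Finset V × Finset V} (h : p.1.card ≠ k) :
    p ∈ cancelPair P0 ↔ p ∈ Vf := by
  unfold cancelPair
  simp only [Finset.mem_union, Finset.mem_sdiff, Finset.mem_image, Finset.mem_univ,
    true_and]
  constructor
  · rintro (⟨hp, -⟩ | ⟨i, rfl⟩)
    · exact hp
    · exact absurd (P0.αcard _) h
  · intro hp
    left
    refine ⟨hp, ?_⟩
    rintro ⟨i, rfl⟩
    exact h (P0.αcard _)

lemma critC_cancelPair (hk : k ≠ 0) {c : ℕ} (hc : c ≠ k) (hc' : c ≠ k + 1) :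
    critC Δ (cancelPair P0) c = critC Δ Vf c := by
  ext σ
  rw [critC, critC, Finset.mem_filter, Finset.mem_filter]
  simp only [and_congr_right_iff, IsCrit]
  intro hσ hcard
  have hne : ∀ i : Fin (P0.r + 1), σ ≠ P0.α i ∧ σ ≠ P0.β i := by
    intro i
    constructor
    · intro h; rw [h, P0.αcard] at hcard; exact hc hcard.symm
    · intro h; rw [h, P0.βcard] at hcard; exact hc' hcard.symm
  have hempty : ((∅, σ) : Finset V × Finset V) ∈ cancelPair P0 ↔ (∅, σ) ∈ Vf :=
    mem_cancelPair_iff P0 (by simpa using fun h => hk h.symm)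
  intro _ _
  have hor : (∀ p ∈ cancelPair P0, σ ≠ p.1 ∧ σ ≠ p.2) ↔ (∀ p ∈ Vf, σ ≠ p.1 ∧ σ ≠ p.2) := by
    constructor
    · intro H p hp
      by_cases hpV : p ∈ cancelPair P0
      · exact H p hpV
      · -- p ∈ Vf \ cancelPair means p is a removed pair
        have : ∃ i : Fin P0.r, (P0.α i.castSucc, P0.β i.succ) = p := by
          by_contra hno
          apply hpV
          unfold cancelPair
          simp only [Finset.mem_union, Finset.mem_sdiff, Finset.mem_image, Finset.mem_univ,
            true_and]
          exact Or.inl ⟨hp, hno⟩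
        obtain ⟨i, rfl⟩ := this
        exact ⟨(hne _).1, (hne _).2⟩
    · intro H p hp
      by_cases hpV : p ∈ Vf
      · exact H p hpV
      · have : ∃ i : Fin (P0.r + 1), (P0.α i, P0.β i) = p := by
          unfold cancelPair at hp
          simp only [Finset.mem_union, Finset.mem_sdiff, Finset.mem_image, Finset.mem_univ,
            true_and] at hp
          rcases hp with ⟨hp, -⟩ | h
          · exact absurd hp hpV
          · exact h
        obtain ⟨i, rfl⟩ := this
        exact ⟨(hne _).1, (hne _).2⟩
  rw [hor, hempty]

/-- Co-trajectories for the cancelled field and the original field coincide in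
degrees away from `k`. -/
noncomputable def coTrajUEquiv {q : ℕ} (hq : q ≠ k) (s t : Finset V) :
    CoTrajU Δ (cancelPair P0) q s t ≃ CoTrajU Δ Vf q s t where
  toFun Q := { Q with vpair := fun i =>
    (mem_cancelPair_iff P0 (by rw [Q.βcard]; exact hq)).mp (Q.vpair i) }
  invFun Q := { Q with vpair := fun i =>
    (mem_cancelPair_iff P0 (by rw [Q.βcard]; exact hq)).mpr (Q.vpair i) }
  left_inv Q := rfl
  right_inv Q := rfl

lemma cbCoeff_cancelPair {q : ℕ} (hq : q ≠ k) (σ τ : Finset V) :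
    cbCoeff Δ (cancelPair P0) q σ τ = cbCoeff Δ Vf q σ τ :=
  finsum_eq_of_bijective (coTrajUEquiv P0 hq σ τ) (Equiv.bijective _) fun _ => rfl

end Aux

/-- For q > k + 1 or q < k - 1 the Morse coboundary operators before and after
cancellation coincide. -/
theorem statement_9 (Δ : SComplex V) (d k : ℕ)
    (hdim : ∀ σ ∈ Δ.faces, σ.card ≤ d + 1) (hdim' : ∃ σ ∈ Δ.faces, σ.card = d + 1)
    (hk1 : 1 ≤ k) (hkd : k ≤ d)
    (Vf : Finset (Finset V × Finset V)) (hV : IsGVF Δ Vf)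
    (σ0 τ0 : Finset V) (hσ0 : σ0 ∈ critC Δ Vf (k + 1)) (hτ0 : τ0 ∈ critC Δ Vf k)
    (P0 : TrajD Δ Vf k σ0 τ0) (hP0uniq : ∀ Q : TrajD Δ Vf k σ0 τ0, Q = P0) :
    ∀ q : ℕ, (k + 1 < q ∨ q + 1 < k) →
      morseCoboundary Δ (cancelPair P0) q = morseCoboundary Δ Vf q := by
  intro q hq
  have hk : k ≠ 0 := by omega
  have h1 : critC Δ (cancelPair P0) q = critC Δ Vf q :=
    critC_cancelPair P0 hk (by omega) (by omega)
  have h2 : critC Δ (cancelPair P0) (q + 1) = critC Δ Vf (q + 1) :=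
    critC_cancelPair P0 hk (by omega) (by omega)
  unfold morseCoboundary
  congr 1
  funext σ
  rw [h1, h2]
  congr 1
  split_ifs with h
  · exact Finset.sum_congr rfl fun τ _ => by rw [cbCoeff_cancelPair P0 (by omega)]
  · rfl
end

section
/- Let Δ be a simplicial complex with a gradient vector field V, let σ be a q-simplex and τ a (q−1)-simplex of Δ. Then reversal of the sequence of simplices gives a weight-preserving bijection between V-trajectories from σ to τ and co-V-trajectories from τ to σ; consequently Σ_{P a V-trajectory from σ to τ} w(P) = Σ_{Q a co-V-trajectory from τ to σ} w(Q). In particular, for V-critical σ and τ, the coefficient of τ in ∂_q^V(σ) equals the coefficient of σ in δ_q^V(τ), i.e., the matrix of δ_q^V is the transpose of the matrix of ∂_q^V. -/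
open scoped Classical

variable {V : Type*} [LinearOrder V]

section Aux

variable {Δ : SComplex V} {Vf : Finset (Finset V × Finset V)} {q : ℕ} {s t : Finset V}

/-- Reversal of a trajectory: the co-trajectory obtained by reversing the sequence. -/
noncomputable def TrajD.toCo (P : TrajD Δ Vf q s t) : CoTrajU Δ Vf q t s where
  r := P.r
  β := fun i => P.α i.rev
  γ := fun i => P.β i.rev
  βmem := fun i => P.αmem _
  γmem := fun i => P.βmem _
  βcard := fun i => P.αcard _
  γcard := fun i => P.βcard _
  first := by simp only [Fin.rev_zero, P.last]
  last := by simp only [Fin.rev_last, P.first]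
  sub := fun i => P.sub _
  vpair := fun i => by
    simpa only [Fin.rev_succ, Fin.rev_castSucc] using P.vpair i.rev
  βne := fun i => by
    simpa only [Fin.rev_succ, Fin.rev_castSucc] using P.αne i.rev
  γne := fun i => by
    simpa only [Fin.rev_succ, Fin.rev_castSucc] using (P.βne i.rev).symm

/-- Reversal of a co-trajectory: the trajectory obtained by reversing the sequence. -/
noncomputable def CoTrajU.toTraj (Q : CoTrajU Δ Vf q t s) : TrajD Δ Vf q s t where
  r := Q.r
  β := fun i => Q.γ i.rev
  α := fun i => Q.β i.rev
  βmem := fun i => Q.γmem _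
  αmem := fun i => Q.βmem _
  βcard := fun i => Q.γcard _
  αcard := fun i => Q.βcard _
  first := by simp only [Fin.rev_zero, Q.last]
  last := by simp only [Fin.rev_last, Q.first]
  sub := fun i => Q.sub _
  vpair := fun i => by
    simpa only [Fin.rev_succ, Fin.rev_castSucc] using Q.vpair i.rev
  αne := fun i => by
    simpa only [Fin.rev_succ, Fin.rev_castSucc] using Q.βne i.rev
  βne := fun i => by
    simpa only [Fin.rev_succ, Fin.rev_castSucc] using (Q.γne i.rev).symm

theorem TrajD.ext2 {P P' : TrajD Δ Vf q s t} (hr : P.r = P'.r)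
    (hβ : HEq P.β P'.β) (hα : HEq P.α P'.α) : P = P' := by
  cases P; cases P'
  cases hr; cases hβ; cases hα; rfl

theorem CoTrajU.ext2 {P P' : CoTrajU Δ Vf q s t} (hr : P.r = P'.r)
    (hβ : HEq P.β P'.β) (hγ : HEq P.γ P'.γ) : P = P' := by
  cases P; cases P'
  cases hr; cases hβ; cases hγ; rfl

theorem toCo_toTraj (P : TrajD Δ Vf q s t) : P.toCo.toTraj = P := by
  refine TrajD.ext2 rfl (heq_of_eq (funext fun i => ?_)) (heq_of_eq (funext fun i => ?_)) <;>
    simp [TrajD.toCo, CoTrajU.toTraj] <;> exact congrArg _ (Fin.rev_rev _)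

theorem toTraj_toCo (Q : CoTrajU Δ Vf q t s) : Q.toTraj.toCo = Q := by
  refine CoTrajU.ext2 rfl (heq_of_eq (funext fun i => ?_)) (heq_of_eq (funext fun i => ?_)) <;>
    simp [TrajD.toCo, CoTrajU.toTraj] <;> exact congrArg _ (Fin.rev_rev _)

theorem List.reverse_ofFn' {X : Type*} {n : ℕ} (f : Fin n → X) :
    (List.ofFn f).reverse = List.ofFn fun i => f i.rev := by
  rw [List.ofFn_eq_map, List.ofFn_eq_map, ← List.map_reverse, List.finRange_reverse,
    List.map_map]
  rfl

theorem seq_toCo (P : TrajD Δ Vf q s t) : P.toCo.seq = P.seq.reverse := by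
  rw [CoTrajU.seq, TrajD.seq, List.reverse_flatten, List.map_ofFn, List.reverse_ofFn']
  rfl

theorem prod_key (r : ℕ) (f : Fin (r + 1) → ℤ) (g : Fin r → ℤ) :
    (∏ i : Fin r, -(f i.succ * g i)) * f 0 =
      (∏ i : Fin r, -(f i.castSucc * g i)) * f (Fin.last r) := by
  have e : ∀ h : Fin r → Fin (r + 1), (∏ i : Fin r, -(f (h i) * g i)) =
      (-1) ^ r * ((∏ i : Fin r, f (h i)) * ∏ i : Fin r, g i) := by
    intro h
    have : ∀ i : Fin r, -(f (h i) * g i) = (-1) * (f (h i) * g i) := fun i => by ring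
    simp_rw [this, Finset.prod_mul_distrib, Finset.prod_const, Finset.card_univ,
      Fintype.card_fin]
  rw [e Fin.succ, e Fin.castSucc]
  have key : f 0 * ∏ i : Fin r, f i.succ = (∏ i : Fin r, f i.castSucc) * f (Fin.last r) :=
    (Fin.prod_univ_succ f).symm.trans (Fin.prod_univ_castSucc f)
  linear_combination ((-1 : ℤ) ^ r * ∏ i : Fin r, g i) * key

theorem wCTU_toCo (P : TrajD Δ Vf q s t) : wCTU P.toCo = wTD P := by
  rw [wCTU, wTD]
  have hrev : ∀ h : Fin P.r → ℤ, (∏ i : Fin P.r, h i.rev) = ∏ i : Fin P.r, h i := fun h =>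
    Fintype.prod_equiv (Fin.revPerm) _ _ fun i => rfl
  calc (∏ i : Fin P.toCo.r,
        -(incidence (P.toCo.γ i.castSucc) (P.toCo.β i.castSucc) *
          incidence (P.toCo.γ i.castSucc) (P.toCo.β i.succ))) *
        incidence (P.toCo.γ (Fin.last P.toCo.r)) (P.toCo.β (Fin.last P.toCo.r))
      = (∏ i : Fin P.r,
          -(incidence (P.β i.rev.succ) (P.α i.rev.succ) *
            incidence (P.β i.rev.succ) (P.α i.rev.castSucc))) *
          incidence (P.β 0) (P.α 0) := by
        simp only [TrajD.toCo, Fin.rev_succ, Fin.rev_castSucc, Fin.rev_last]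
        rfl
    _ = (∏ i : Fin P.r,
          -(incidence (P.β i.succ) (P.α i.succ) *
            incidence (P.β i.succ) (P.α i.castSucc))) *
          incidence (P.β 0) (P.α 0) := by
        rw [hrev fun j => -(incidence (P.β j.succ) (P.α j.succ) *
            incidence (P.β j.succ) (P.α j.castSucc))]
    _ = _ := prod_key P.r (fun j => incidence (P.β j) (P.α j))
          (fun j => incidence (P.β j.succ) (P.α j.castSucc))

/-- The reversal equivalence. -/
noncomputable def revEquiv (Δ : SComplex V) (Vf : Finset (Finset V × Finset V)) (q : ℕ)
    (s t : Finset V) : TrajD Δ Vf q s t ≃ CoTrajU Δ Vf q t s where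
  toFun := TrajD.toCo
  invFun := CoTrajU.toTraj
  left_inv := toCo_toTraj
  right_inv := toTraj_toCo

end Aux

/-- Reversal gives a weight-preserving bijection between V-trajectories from σ to τ and
co-V-trajectories from τ to σ; consequently the weighted sums agree, and the matrix of
δ_q is the transpose of the matrix of ∂_q. -/
theorem statement_15 (Δ : SComplex V) (Vf : Finset (Finset V × Finset V))
    (hV : IsGVF Δ Vf) (q : ℕ) (σ τ : Finset V) (hσ : σ ∈ Δ.faces) (hτ : τ ∈ Δ.faces)
    (hσc : σ.card = q + 1) (hτc : τ.card = q) :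
    (∃ e : TrajD Δ Vf q σ τ ≃ CoTrajU Δ Vf q τ σ,
        ∀ P : TrajD Δ Vf q σ τ, (e P).seq = P.seq.reverse ∧ wCTU (e P) = wTD P) ∧
      (∑ᶠ P : TrajD Δ Vf q σ τ, wTD P) = (∑ᶠ Q : CoTrajU Δ Vf q τ σ, wCTU Q) ∧
      (IsCrit Δ Vf σ → IsCrit Δ Vf τ →
        morseBoundary Δ Vf q (Finsupp.single σ 1) τ =
          morseCoboundary Δ Vf q (Finsupp.single τ 1) σ) := by
  refine ⟨⟨revEquiv Δ Vf q σ τ, fun P => ⟨seq_toCo P, wCTU_toCo P⟩⟩, ?_, ?_⟩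
  · exact (finsum_eq_of_bijective (revEquiv Δ Vf q σ τ)
      (revEquiv Δ Vf q σ τ).bijective fun P => (wCTU_toCo P).symm)
  · intro hcσ hcτ
    have hσm : σ ∈ critC Δ Vf (q + 1) := by
      simp only [critC, Finset.mem_filter]; exact ⟨hσ, hσc, hcσ⟩
    have hτm : τ ∈ critC Δ Vf q := by
      simp only [critC, Finset.mem_filter]; exact ⟨hτ, hτc, hcτ⟩
    have key : bCoeff Δ Vf q σ τ = cbCoeff Δ Vf q τ σ :=
      finsum_eq_of_bijective (revEquiv Δ Vf q σ τ)
        (revEquiv Δ Vf q σ τ).bijective fun P => (wCTU_toCo P).symm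
    rw [morseBoundary, morseCoboundary, Finsupp.lsum_single, Finsupp.lsum_single,
      LinearMap.toSpanSingleton_apply, LinearMap.toSpanSingleton_apply, one_smul, one_smul,
      if_pos hσm, if_pos hτm, Finset.sum_apply', Finset.sum_apply']
    rw [Finset.sum_eq_single τ (fun b _ hb => by
        simp [Finsupp.single_apply, hb]) (fun h => absurd hτm h),
      Finset.sum_eq_single σ (fun b _ hb => by
        simp [Finsupp.single_apply, hb]) (fun h => absurd hσm h)]
    simp [Finsupp.single_apply, key]
end

section
/- Let Δ be a d-dimensional simplicial complex with a gradient vector field V, let (σ_0^{(k)}, τ_0^{(k−1)}) be a cancellable critical pair with unique V-trajectory P_0, and let W be the gradient vector field obtained by cancelling (σ_0, τ_0) from V. Then a sequence of simplices of Δ that contains no simplex of P_0 is a V-trajectory if and only if it is a W-trajectory; in particular, for any W-critical k-simplex σ_j and W-critical (k−1)-simplex τ_i, the V-trajectories from σ_j to τ_i containing no simplex of P_0 coincide with the W-trajectories from σ_j to τ_i containing no simplex of P_0. -/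
open scoped Classical

variable {V : Type*} [LinearOrder V]

section Aux

variable {Δ : SComplex V} {Vf : Finset (Finset V × Finset V)} {k q : ℕ}
  {σ0 τ0 s t : Finset V}

lemma alpha_mem_simps (P0 : TrajD Δ Vf k σ0 τ0) (i : Fin (P0.r + 1)) :
    P0.α i ∈ P0.simps :=
  Finset.mem_union_right _ (Finset.mem_image_of_mem _ (Finset.mem_univ i))

lemma pair_transfer (P0 : TrajD Δ Vf k σ0 τ0) {a b : Finset V} (ha : a ∉ P0.simps) :
    ((a, b) ∈ Vf ↔ (a, b) ∈ cancelPair P0) := by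
  unfold cancelPair
  simp only [Finset.mem_union, Finset.mem_sdiff, Finset.mem_image, Finset.mem_univ,
    true_and]
  constructor
  · intro h
    left
    refine ⟨h, ?_⟩
    rintro ⟨i, hi⟩
    injection hi with h1 h2
    subst h1
    exact ha (alpha_mem_simps P0 _)
  · rintro (⟨h, -⟩ | ⟨i, hi⟩)
    · exact h
    · injection hi with h1 h2
      subst h1
      exact (ha (alpha_mem_simps P0 _)).elim

lemma TrajD.alpha_mem_seq (P : TrajD Δ Vf q s t) (i : Fin (P.r + 1)) :
    P.α i ∈ P.seq := by
  unfold TrajD.seq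
  simp only [List.mem_flatten, List.mem_ofFn]
  exact ⟨[P.β i, P.α i], ⟨i, rfl⟩, by simp⟩

lemma Traj.alpha_mem_seq (P : Traj Δ Vf q s t) (i : Fin P.r) :
    P.α i ∈ P.seq := by
  unfold Traj.seq
  simp only [List.mem_append, List.mem_flatten, List.mem_ofFn]
  exact Or.inl ⟨[P.β i.castSucc, P.α i], ⟨i, rfl⟩, by simp⟩

end Aux

/-- A sequence of simplices avoiding the simplices of P₀ is a V-trajectory iff it is a
W-trajectory; in particular this holds for trajectories between W-critical simplices. -/
theorem statement_16 (Δ : SComplex V) (d k : ℕ)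
    (hdim : ∀ σ ∈ Δ.faces, σ.card ≤ d + 1) (hdim' : ∃ σ ∈ Δ.faces, σ.card = d + 1)
    (hk1 : 1 ≤ k) (hkd : k ≤ d)
    (Vf : Finset (Finset V × Finset V)) (hV : IsGVF Δ Vf)
    (σ0 τ0 : Finset V) (hσ0 : σ0 ∈ critC Δ Vf (k + 1)) (hτ0 : τ0 ∈ critC Δ Vf k)
    (P0 : TrajD Δ Vf k σ0 τ0) (hP0uniq : ∀ Q : TrajD Δ Vf k σ0 τ0, Q = P0) :
    (∀ (q : ℕ) (s t : Finset V) (L : List (Finset V)), (∀ x ∈ L, x ∉ P0.simps) →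
        ((∃ P : TrajD Δ Vf q s t, P.seq = L) ↔
          ∃ P : TrajD Δ (cancelPair P0) q s t, P.seq = L)) ∧
    (∀ (q : ℕ) (s t : Finset V) (L : List (Finset V)), (∀ x ∈ L, x ∉ P0.simps) →
        ((∃ P : Traj Δ Vf q s t, P.seq = L) ↔
          ∃ P : Traj Δ (cancelPair P0) q s t, P.seq = L)) ∧
    ∀ σj ∈ critC Δ (cancelPair P0) (k + 1), ∀ τi ∈ critC Δ (cancelPair P0) k,
      ∀ L : List (Finset V), (∀ x ∈ L, x ∉ P0.simps) →
        ((∃ P : TrajD Δ Vf k σj τi, P.seq = L) ↔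
          ∃ P : TrajD Δ (cancelPair P0) k σj τi, P.seq = L) := by
  have h1 : ∀ (q : ℕ) (s t : Finset V) (L : List (Finset V)),
      (∀ x ∈ L, x ∉ P0.simps) →
      ((∃ P : TrajD Δ Vf q s t, P.seq = L) ↔
        ∃ P : TrajD Δ (cancelPair P0) q s t, P.seq = L) := by
    intro q s t L hL
    constructor
    · rintro ⟨P, rfl⟩
      exact ⟨{ P with vpair := fun i =>
        (pair_transfer P0 (hL _ (P.alpha_mem_seq i.castSucc))).mp (P.vpair i) }, rfl⟩
    · rintro ⟨P, rfl⟩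
      exact ⟨{ P with vpair := fun i =>
        (pair_transfer P0 (hL _ (P.alpha_mem_seq i.castSucc))).mpr (P.vpair i) }, rfl⟩
  refine ⟨h1, ?_, fun σj _ τi _ L hL => h1 k σj τi L hL⟩
  intro q s t L hL
  constructor
  · rintro ⟨P, rfl⟩
    exact ⟨{ P with vpair := fun i =>
      (pair_transfer P0 (hL _ (P.alpha_mem_seq i))).mp (P.vpair i) }, rfl⟩
  · rintro ⟨P, rfl⟩
    exact ⟨{ P with vpair := fun i =>
      (pair_transfer P0 (hL _ (P.alpha_mem_seq i))).mpr (P.vpair i) }, rfl⟩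
end
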